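/- Let ψ = ⊕_a Tr(ρ_a ·) be a δ-form on B = ⊕_{a=1}^d M_{n_a} and let T ∈ B satisfy Tr(ρ_a^{-1} T_a* T_a) = δ² for each block component T_a of T. Then A(x) := T x T* is a quantum adjacency operator (i.e. *-preserving with m(A⊗A)m* = δ² A), and the associated matrix D_{ab} = ⟨ρ_b^{-1}, A(ρ_a^{-1})⟩_ψ equals δ² times the identity matrix: D_{ab} = δ² δ_{ab}. -/

import Mathlib

open scoped TensorProduct ComplexOrder
open Matrix

/-- The multimatrix algebra `B = ⊕_{a=1}^d M_{n_a}` over `ℂ`. -/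
abbrev MB (d : ℕ) (n : Fin d → ℕ) := ∀ a : Fin d, Matrix (Fin (n a)) (Fin (n a)) ℂ

/-- The state `ψ = ⊕_a Tr(ρ_a ·)` as a linear functional. -/
noncomputable def psiL {d : ℕ} {n : Fin d → ℕ} (ρ : MB d n) : MB d n →ₗ[ℂ] ℂ where
  toFun X := ∑ a, (ρ a * X a).trace
  map_add' x y := by simp [mul_add, Finset.sum_add_distrib]
  map_smul' c x := by simp [Finset.mul_sum, mul_smul_comm]

/-- The GNS inner product on `B ⊗ B` paired against the pure tensor `x ⊗ y` in the first
(conjugated) slot. -/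
noncomputable def pairL {d : ℕ} {n : Fin d → ℕ} (ρ : MB d n) (x y : MB d n) :
    (MB d n ⊗[ℂ] MB d n) →ₗ[ℂ] ℂ :=
  TensorProduct.lift
    (LinearMap.mk₂ ℂ (fun c e => psiL ρ (star x * c) * psiL ρ (star y * e))
      (fun c c' e => by simp [mul_add, map_add, add_mul])
      (fun s c e => by simp [mul_smul_comm, _root_.map_smul, smul_eq_mul]; ring)
      (fun c e e' => by simp [mul_add, map_add])
      (fun s c e => by simp [mul_smul_comm, _root_.map_smul, smul_eq_mul]; ring))

/-- The rank-one quantum adjacency operator `A(x) = T x T*`. -/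
noncomputable def rankOneA {d : ℕ} {n : Fin d → ℕ} (T : MB d n) :
    MB d n →ₗ[ℂ] MB d n where
  toFun x := T * x * star T
  map_add' x y := by simp [mul_add, add_mul]
  map_smul' c x := by simp [mul_smul_comm, smul_mul_assoc]

/-! For `ρ_a = diag(w_a)` the pairing `⟨x ⊗ y, t⟩` is nondegenerate (it rescales the
coordinates of `t` in the matrix-unit basis), so the hypothesis on `mstar` forces
`m*(z) = ∑_{a,j,k} w_{aj}⁻¹ (z e^a_{kj}) ⊗ e^a_{jk}`. Hence
`m(A ⊗ A)m*(z) = T z (∑ w_{aj}⁻¹ e^a_{kj} T*T e^a_{jk}) T*`, and the middle sum is the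
central element `∑_a Tr(ρ_a⁻¹ T_a* T_a) 1_a = δ² 1`. Since `A` preserves blocks, `D` is
diagonal, and `D_aa = Tr(ρ_a ρ_a⁻¹ T_a ρ_a⁻¹ T_a*) = Tr(ρ_a⁻¹ T_a* T_a) = δ²`. -/

namespace MB

variable {d : ℕ} {n : Fin d → ℕ}

def blockDiag (w : ∀ a, Fin (n a) → ℂ) : MB d n := fun a => diagonal (w a)

def blockUnit (a : Fin d) (i j : Fin (n a)) : MB d n := Pi.single a (single i j 1)

variable (d n) in
noncomputable def blockBasis :
    Module.Basis ((a : Fin d) × (Fin (n a) × Fin (n a))) ℂ (MB d n) :=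
  Pi.basis fun a => stdBasis ℂ (Fin (n a)) (Fin (n a))

lemma inv_blockDiag {w : ∀ a, Fin (n a) → ℂ} (hw : ∀ a k, w a k ≠ 0) (a : Fin d) :
    (blockDiag w a)⁻¹ = diagonal fun k => (w a k)⁻¹ :=
  inv_eq_left_inv <| by simp [blockDiag, diagonal_mul_diagonal, hw]

lemma isUnit_det_blockDiag {w : ∀ a, Fin (n a) → ℂ} (hw : ∀ a k, w a k ≠ 0) (a : Fin d) :
    IsUnit (blockDiag w a).det := by
  simp [blockDiag, det_diagonal, Finset.prod_ne_zero_iff, hw]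

lemma isHermitian_blockDiag_ofReal (c : ∀ a, Fin (n a) → ℝ) (a : Fin d) :
    (blockDiag (fun a k => (c a k : ℂ)) a).IsHermitian :=
  isHermitian_diagonal_of_self_adjoint _ <| funext fun k => Complex.conj_ofReal (c a k)

lemma blockBasis_repr (X : MB d n) (μ : (a : Fin d) × (Fin (n a) × Fin (n a))) :
    (blockBasis d n).repr X μ = X μ.1 μ.2.1 μ.2.2 := by
  obtain ⟨a, i, j⟩ := μ
  rfl

lemma star_blockUnit (a : Fin d) (i j : Fin (n a)) :
    star (blockUnit a i j : MB d n) = blockUnit a j i := by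
  rw [blockUnit, blockUnit, ← Pi.single_star, star_eq_conjTranspose, conjTranspose_single,
    star_one]

lemma psiL_single (ρ : MB d n) (a : Fin d) (M : Matrix (Fin (n a)) (Fin (n a)) ℂ) :
    psiL ρ (Pi.single a M) = (ρ a * M).trace := by
  change ∑ b, (ρ b * (Pi.single a M : MB d n) b).trace = _
  rw [Finset.sum_eq_single a (fun b _ hb => by simp [Pi.single_eq_of_ne hb]) (by simp),
    Pi.single_eq_same]

lemma psiL_blockDiag_apply (w : ∀ a, Fin (n a) → ℂ) (X : MB d n) :
    psiL (blockDiag w) X = ∑ a, ∑ k, w a k * X a k k := by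
  simp [psiL, blockDiag, trace, diagonal_mul]

lemma psiL_blockDiag_blockUnit_mul (w : ∀ a, Fin (n a) → ℂ) (a : Fin d) (i j : Fin (n a))
    (X : MB d n) : psiL (blockDiag w) (blockUnit a i j * X) = w a i * X a j i := by
  rw [blockUnit, ← Pi.single_mul_left, psiL_single]
  simp [blockDiag, trace, mul_apply, single_apply, ite_and, diagonal_apply]

lemma psiL_blockDiag_mul_blockUnit (w : ∀ a, Fin (n a) → ℂ) (a : Fin d) (i j : Fin (n a))
    (X : MB d n) : psiL (blockDiag w) (X * blockUnit a i j) = w a j * X a j i := by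
  rw [blockUnit, ← Pi.single_mul_right, psiL_single]
  simp [blockDiag, trace, mul_apply, single_apply, ite_and, diagonal_apply]

lemma pairL_tmul (ρ x y u v : MB d n) :
    pairL ρ x y (u ⊗ₜ v) = psiL ρ (star x * u) * psiL ρ (star y * v) := rfl

lemma pairL_blockUnit_blockUnit (w : ∀ a, Fin (n a) → ℂ) (a b : Fin d) (i j : Fin (n a))
    (k l : Fin (n b)) (t : MB d n ⊗[ℂ] MB d n) :
    pairL (blockDiag w) (blockUnit a i j) (blockUnit b k l) t =
      w a j * w b l *
        ((blockBasis d n).tensorProduct (blockBasis d n)).repr t (⟨a, i, j⟩, ⟨b, k, l⟩) := by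
  induction t using TensorProduct.induction_on with
  | zero => simp
  | tmul u v =>
    simp only [pairL_tmul, star_blockUnit, psiL_blockDiag_blockUnit_mul,
      Module.Basis.tensorProduct_repr_tmul_apply, blockBasis_repr, smul_eq_mul]
    ring
  | add s t hs ht => simp only [map_add, Finsupp.add_apply, hs, ht, mul_add]

lemma eq_zero_of_forall_pairL_eq_zero {w : ∀ a, Fin (n a) → ℂ} (hw : ∀ a k, w a k ≠ 0)
    {t : MB d n ⊗[ℂ] MB d n} (h : ∀ x y, pairL (blockDiag w) x y t = 0) : t = 0 := by
  refine ((blockBasis d n).tensorProduct (blockBasis d n)).ext_elem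
    fun ⟨⟨a, i, j⟩, ⟨b, k, l⟩⟩ => ?_
  have := h (blockUnit a i j) (blockUnit b k l)
  rw [pairL_blockUnit_blockUnit] at this
  simpa [hw] using this

noncomputable def mulAdjoint (w : ∀ a, Fin (n a) → ℂ) (z : MB d n) : MB d n ⊗[ℂ] MB d n :=
  ∑ a, ∑ j, ∑ k, (w a j)⁻¹ • ((z * blockUnit a k j) ⊗ₜ blockUnit a j k)

lemma pairL_mulAdjoint {w : ∀ a, Fin (n a) → ℂ} (hw : ∀ a k, w a k ≠ 0) (x y z : MB d n) :
    pairL (blockDiag w) x y (mulAdjoint w z) = psiL (blockDiag w) (star (x * y) * z) := by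
  have hterm : ∀ a j k, (w a j)⁻¹ * (psiL (blockDiag w) (star x * (z * blockUnit a k j)) *
      psiL (blockDiag w) (star y * blockUnit a j k)) =
        w a k * ((star y) a k j * (star x * z) a j k) := by
    intro a j k
    rw [← mul_assoc (star x), psiL_blockDiag_mul_blockUnit, psiL_blockDiag_mul_blockUnit]
    field_simp [hw a j]
  simp only [mulAdjoint, map_sum, map_smul, pairL_tmul, smul_eq_mul, hterm]
  rw [star_mul, mul_assoc, psiL_blockDiag_apply]
  simp only [Pi.mul_apply, mul_apply, Finset.mul_sum]
  exact Finset.sum_congr rfl fun a _ => Finset.sum_comm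

lemma eq_mulAdjoint_of_forall_pairL {w : ∀ a, Fin (n a) → ℂ} (hw : ∀ a k, w a k ≠ 0)
    {z : MB d n} {t : MB d n ⊗[ℂ] MB d n}
    (h : ∀ x y, psiL (blockDiag w) (star (x * y) * z) = pairL (blockDiag w) x y t) :
    t = mulAdjoint w z :=
  sub_eq_zero.mp <| eq_zero_of_forall_pairL_eq_zero hw fun x y => by
    rw [map_sub, ← h, pairL_mulAdjoint hw, sub_self]

lemma sum_smul_single_mul_mul_single {m α : Type*} [Fintype m] [DecidableEq m] [CommSemiring α]
    (v : m → α) (X : Matrix m m α) :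
    ∑ j, ∑ k, v j • (single k j 1 * X * single j k 1) = (∑ j, v j * X j j) • 1 := by
  ext p q
  by_cases hpq : p = q <;> simp [Matrix.sum_apply, single_apply, one_apply, ite_and, hpq]

lemma blockUnit_mul_mul_blockUnit (a : Fin d) (i j k l : Fin (n a)) (X : MB d n) :
    blockUnit a i j * X * blockUnit a k l =
      Pi.single a (single i j 1 * X a * single k l 1) := by
  rw [blockUnit, blockUnit, ← Pi.single_mul_left, ← Pi.single_mul_right, Pi.single_eq_same]

lemma sum_smul_blockUnit_mul_mul_blockUnit (v : ∀ a, Fin (n a) → ℂ) (X : MB d n) :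
    ∑ a, ∑ j, ∑ k, v a j • (blockUnit a k j * X * blockUnit a j k) =
      fun a => (∑ j, v a j * X a j j) • 1 := by
  funext b
  simp only [Finset.sum_apply, Pi.smul_apply, blockUnit_mul_mul_blockUnit]
  rw [Finset.sum_eq_single b (fun a _ hab => by simp [Pi.single_eq_of_ne' hab]) (by simp)]
  simp only [Pi.single_eq_same]
  exact sum_smul_single_mul_mul_single _ _

lemma rankOneA_apply (T x : MB d n) : rankOneA T x = T * x * star T := rfl

lemma rankOneA_star (T x : MB d n) : rankOneA T (star x) = star (rankOneA T x) := by
  simp only [rankOneA_apply, star_mul, star_star, mul_assoc]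

lemma mul'_map_rankOneA_mulAdjoint {w : ∀ a, Fin (n a) → ℂ} (hw : ∀ a k, w a k ≠ 0)
    {T : MB d n} {s : ℂ} (hT : ∀ a, ((blockDiag w a)⁻¹ * (T a)ᴴ * T a).trace = s)
    (z : MB d n) :
    LinearMap.mul' ℂ (MB d n) (TensorProduct.map (rankOneA T) (rankOneA T) (mulAdjoint w z)) =
      s • rankOneA T z := by
  have hsum : ∑ a, ∑ j, ∑ k, (w a j)⁻¹ • (blockUnit a k j * (star T * T) * blockUnit a j k) =
      s • (1 : MB d n) := by
    rw [sum_smul_blockUnit_mul_mul_blockUnit]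
    funext a
    simp [← hT a, inv_blockDiag hw, Matrix.mul_assoc, trace, diagonal_mul,
      star_eq_conjTranspose]
  calc _ = T * z *
        (∑ a, ∑ j, ∑ k, (w a j)⁻¹ • (blockUnit a k j * (star T * T) * blockUnit a j k)) *
          star T := by
        simp only [mulAdjoint, map_sum, map_smul, TensorProduct.map_tmul, LinearMap.mul'_apply,
          rankOneA_apply, Finset.mul_sum, Finset.sum_mul, mul_smul_comm, smul_mul_assoc,
          mul_assoc]
    _ = s • rankOneA T z := by rw [hsum, mul_smul_comm, smul_mul_assoc, mul_one, rankOneA_apply]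

lemma psiL_star_single_inv_mul_rankOneA_single_inv {ρ : MB d n}
    (hρ_herm : ∀ a, (ρ a).IsHermitian) (hρ_unit : ∀ a, IsUnit (ρ a).det) (T : MB d n)
    (a b : Fin d) :
    psiL ρ (star (Pi.single b (ρ b)⁻¹) * rankOneA T (Pi.single a (ρ a)⁻¹)) =
      if a = b then ((ρ a)⁻¹ * (T a)ᴴ * T a).trace else 0 := by
  rw [rankOneA_apply, ← Pi.single_mul_right, ← Pi.single_mul_left, ← Pi.single_star,
    ← Pi.single_mul_left]
  split_ifs with hab
  · subst hab
    rw [Pi.single_eq_same, psiL_single, star_eq_conjTranspose, (hρ_herm a).inv.eq,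
      ← Matrix.mul_assoc, mul_nonsing_inv _ (hρ_unit a), Matrix.one_mul, Pi.star_apply,
      star_eq_conjTranspose, trace_mul_cycle, trace_mul_cycle]
  · rw [Pi.single_eq_of_ne (Ne.symm hab), Matrix.mul_zero, Pi.single_zero, map_zero]

end MB

open MB in
theorem stmt8_general {d : ℕ} {n : Fin d → ℕ}
    (c : ∀ a, Fin (n a) → ℝ) (hc : ∀ a k, 0 < c a k)
    (ρ : MB d n) (hρ : ∀ a, ρ a = Matrix.diagonal (fun k => (c a k : ℂ)))
    (δ : ℝ)
    (mstar : MB d n →ₗ[ℂ] MB d n ⊗[ℂ] MB d n)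
    (hmstar : ∀ x y z : MB d n,
      psiL ρ (star (x * y) * z) = pairL ρ x y (mstar z))
    (T : MB d n)
    (hT : ∀ a, ((ρ a)⁻¹ * (T a)ᴴ * T a).trace = (δ ^ 2 : ℂ)) :
    (∀ x, rankOneA T (star x) = star (rankOneA T x)) ∧
    (∀ z : MB d n,
      LinearMap.mul' ℂ (MB d n)
          (TensorProduct.map (rankOneA T) (rankOneA T) (mstar z)) =
        (δ ^ 2 : ℂ) • rankOneA T z) ∧
    (∀ a b : Fin d,
      psiL ρ (star (Pi.single b ((ρ b)⁻¹)) * rankOneA T (Pi.single a ((ρ a)⁻¹))) =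
        if a = b then (δ ^ 2 : ℂ) else 0) := by
  obtain rfl : ρ = blockDiag fun a k => (c a k : ℂ) := funext hρ
  have hw : ∀ a k, (c a k : ℂ) ≠ 0 := fun a k => Complex.ofReal_ne_zero.mpr (hc a k).ne'
  refine ⟨rankOneA_star T, fun z => ?_, fun a b => ?_⟩
  · rw [eq_mulAdjoint_of_forall_pairL hw (hmstar · · z)]
    exact mul'_map_rankOneA_mulAdjoint hw hT z
  · rw [psiL_star_single_inv_mul_rankOneA_single_inv (isHermitian_blockDiag_ofReal c)
      (isUnit_det_blockDiag hw) T a b]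
    split_ifs
    · exact hT a
    · rfl

/-- let `ψ = ⊕_a Tr(ρ_a ·)` be a `δ`-form on `B = ⊕_a M_{n_a}`, and let
`T ∈ B` satisfy `Tr(ρ_a⁻¹ T_a* T_a) = δ²` for each block.  Then `A(x) = T x T*` is a
quantum adjacency operator (*-preserving with `m(A⊗A)m* = δ² A`), and the matrix
`D_{ab} = ⟨ρ_b⁻¹, A(ρ_a⁻¹)⟩_ψ` equals `δ²` times the identity: `D_{ab} = δ² δ_{ab}`. -/
theorem stmt8 {d : ℕ} {n : Fin d → ℕ}
    (c : ∀ a, Fin (n a) → ℝ) (hc : ∀ a k, 0 < c a k)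
    (ρ : MB d n) (hρ : ∀ a, ρ a = Matrix.diagonal (fun k => (c a k : ℂ)))
    (δ : ℝ) (hδ : 0 < δ)
    (mstar : MB d n →ₗ[ℂ] MB d n ⊗[ℂ] MB d n)
    (hmstar : ∀ x y z : MB d n,
      psiL ρ (star (x * y) * z) = pairL ρ x y (mstar z))
    (hform : ∀ z : MB d n, LinearMap.mul' ℂ (MB d n) (mstar z) = (δ ^ 2 : ℂ) • z)
    (T : MB d n)
    (hT : ∀ a, ((ρ a)⁻¹ * (T a)ᴴ * T a).trace = (δ ^ 2 : ℂ)) :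
    (∀ x, rankOneA T (star x) = star (rankOneA T x)) ∧
    (∀ z : MB d n,
      LinearMap.mul' ℂ (MB d n)
          (TensorProduct.map (rankOneA T) (rankOneA T) (mstar z)) =
        (δ ^ 2 : ℂ) • rankOneA T z) ∧
    (∀ a b : Fin d,
      psiL ρ (star (Pi.single b ((ρ b)⁻¹)) * rankOneA T (Pi.single a ((ρ a)⁻¹))) =
        if a = b then (δ ^ 2 : ℂ) else 0) :=
  stmt8_general c hc ρ hρ δ mstar hmstar T hT
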